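/- In the free left distributive algebra A on one generator x, for every p, q ∈ A there exists n with q <_L p^(n), where p^(0) = p and p^(n+1) = p·p^(n). In particular it suffices to prove p^(n) ≥_L x^(n) for all n, and that for sufficiently large n, x^(n) ≥_L q. -/

import Mathlib

/-- Terms in one generator x with a binary operation ·. -/
inductive LDTerm : Type
  | x : LDTerm
  | mul : LDTerm → LDTerm → LDTerm

/-- The congruence generated by the left distributive law. -/
inductive LDEq : LDTerm → LDTerm → Prop
  | ld (a b c : LDTerm) :
      LDEq (LDTerm.mul a (LDTerm.mul b c)) (LDTerm.mul (LDTerm.mul a b) (LDTerm.mul a c))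
  | refl (a : LDTerm) : LDEq a a
  | symm {a b : LDTerm} : LDEq a b → LDEq b a
  | trans {a b c : LDTerm} : LDEq a b → LDEq b c → LDEq a c
  | congr {a b c d : LDTerm} : LDEq a b → LDEq c d → LDEq (LDTerm.mul a c) (LDTerm.mul b d)

instance LDTerm.setoid : Setoid LDTerm :=
  ⟨LDEq, LDEq.refl, LDEq.symm, LDEq.trans⟩

/-- The free left distributive algebra on one generator. -/
def FreeLD : Type := Quotient LDTerm.setoid

/-- The generator x of the free left distributive algebra. -/
def FreeLD.x : FreeLD := ⟦LDTerm.x⟧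

/-- Multiplication on the free left distributive algebra. -/
def FreeLD.mul : FreeLD → FreeLD → FreeLD :=
  Quotient.map₂ LDTerm.mul fun _ _ h _ _ h' => LDEq.congr h h'

/-- a <_L b : b = a·c₀·c₁·...·c_n (left association) for some n ≥ 0. -/
def FreeLD.ltL (a b : FreeLD) : Prop :=
  ∃ (c : FreeLD) (l : List FreeLD), b = List.foldl FreeLD.mul (FreeLD.mul a c) l

/-- Iterated dot powers: p^(0) = p, p^(n+1) = p·p^(n). -/
def FreeLD.dotPow (p : FreeLD) : ℕ → FreeLD
  | 0 => p
  | n + 1 => FreeLD.mul p (FreeLD.dotPow p n)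

/-!
Every element `a` absorbs large powers of the generator: `a · x^(n) = x^(n+1)` for all large `n`
(induct on a term for `a`, using left distributivity). Hence `q <_L q · x^(n) = x^(n+1)`.
Conversely, writing `p = u · v`, left distributivity gives `p^(N) = u · v^(N)`, so a large power
`x^(m) ≤_L v^(N)` yields `x^(m+1) = u · x^(m) ≤_L p^(N)`; by induction `p^(N)` lies above
arbitrarily large powers of `x`. Chaining the two gives `q <_L p^(N)`.
-/

namespace FreeLD

/-- `a ≤_L b`: the empty list gives `a = b`, a nonempty one `a <_L b`. -/
def leL (a b : FreeLD) : Prop := ∃ l : List FreeLD, b = l.foldl mul a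

@[elab_as_elim]
theorem induction_on {P : FreeLD → Prop} (a : FreeLD) (x : P x)
    (mul : ∀ u v, P u → P v → P (mul u v)) : P a := by
  induction a using Quotient.ind with | _ t =>
  induction t with
  | x => exact x
  | mul u v hu hv => exact mul ⟦u⟧ ⟦v⟧ hu hv

theorem self_distrib (a b c : FreeLD) : mul a (mul b c) = mul (mul a b) (mul a c) := by
  induction a using Quotient.ind
  induction b using Quotient.ind
  induction c using Quotient.ind
  exact Quotient.sound (LDEq.ld _ _ _)

theorem mul_foldl (a z : FreeLD) (l : List FreeLD) :
    mul a (l.foldl mul z) = (l.map (mul a)).foldl mul (mul a z) := by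
  induction l generalizing z with
  | nil => rfl
  | cons c l ih => rw [List.foldl_cons, ih, List.map_cons, List.foldl_cons, self_distrib]

theorem dotPow_mul (u v : FreeLD) (n : ℕ) : dotPow (mul u v) n = mul u (dotPow v n) := by
  induction n with
  | zero => rfl
  | succ n ih => rw [dotPow, dotPow, ih, ← self_distrib]

theorem ltL_mul (a c : FreeLD) : ltL a (mul a c) := ⟨c, [], rfl⟩

theorem leL_refl (a : FreeLD) : leL a a := ⟨[], rfl⟩

theorem leL.mul_left {b c : FreeLD} (h : leL b c) (a : FreeLD) : leL (mul a b) (mul a c) := by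
  obtain ⟨l, rfl⟩ := h
  exact ⟨l.map (mul a), mul_foldl a b l⟩

theorem ltL.trans_leL {a b c : FreeLD} (hab : ltL a b) (hbc : leL b c) : ltL a c := by
  obtain ⟨d, l, rfl⟩ := hab
  obtain ⟨l', rfl⟩ := hbc
  exact ⟨d, l ++ l', (List.foldl_append ..).symm⟩

theorem exists_mul_dotPow_x_eq (a : FreeLD) :
    ∃ N, ∀ n ≥ N, mul a (dotPow x n) = dotPow x (n + 1) := by
  induction a using induction_on with
  | x => exact ⟨0, fun _ _ => rfl⟩
  | mul u v ihu ihv =>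
    obtain ⟨Nu, hu⟩ := ihu
    obtain ⟨Nv, hv⟩ := ihv
    refine ⟨max Nu Nv + 1, fun n hn => ?_⟩
    obtain ⟨m, rfl⟩ : ∃ m, n = m + 1 := ⟨n - 1, by omega⟩
    calc mul (mul u v) (dotPow x (m + 1))
        = mul (mul u v) (mul u (dotPow x m)) := by rw [hu m (by omega)]
      _ = mul u (mul v (dotPow x m)) := (self_distrib _ _ _).symm
      _ = mul u (dotPow x (m + 1)) := by rw [hv m (by omega)]
      _ = dotPow x (m + 2) := hu (m + 1) (by omega)

theorem exists_dotPow_x_leL_dotPow (p : FreeLD) (g : ℕ) :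
    ∃ N m, g ≤ m ∧ leL (dotPow x m) (dotPow p N) := by
  induction p using induction_on generalizing g with
  | x => exact ⟨g, g, le_rfl, leL_refl _⟩
  | mul u v _ ihv =>
    obtain ⟨Nu, hu⟩ := exists_mul_dotPow_x_eq u
    obtain ⟨N, m, hm, hle⟩ := ihv (max g Nu)
    refine ⟨N, m + 1, by omega, ?_⟩
    rw [dotPow_mul, ← hu m (by omega)]
    exact hle.mul_left u

end FreeLD

theorem FreeLD.exists_dotPow_gt_general :
    ∀ p q : FreeLD, ∃ n : ℕ, FreeLD.ltL q (FreeLD.dotPow p n) := by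
  intro p q
  obtain ⟨k, hk⟩ := exists_mul_dotPow_x_eq q
  obtain ⟨N, m, hm, hle⟩ := exists_dotPow_x_leL_dotPow p (k + 1)
  obtain ⟨j, rfl⟩ : ∃ j, m = j + 1 := ⟨m - 1, by omega⟩
  have hq : ltL q (dotPow x (j + 1)) := hk j (by omega) ▸ ltL_mul q _
  exact ⟨N, hq.trans_leL hle⟩

/-- Theorem 1(iii): assuming <_L is a (strict) linear order on the free left
distributive algebra, for all p, q there is an n with q <_L p^(n). -/
theorem FreeLD.exists_dotPow_gt
    (hirr : ∀ a : FreeLD, ¬ FreeLD.ltL a a)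
    (htrans : ∀ a b c : FreeLD, FreeLD.ltL a b → FreeLD.ltL b c → FreeLD.ltL a c)
    (htri : ∀ a b : FreeLD, FreeLD.ltL a b ∨ a = b ∨ FreeLD.ltL b a) :
    ∀ p q : FreeLD, ∃ n : ℕ, FreeLD.ltL q (FreeLD.dotPow p n) :=
  FreeLD.exists_dotPow_gt_general
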